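/- arXiv:0905.4405 — 11 statements merged into one kernel-verified Lean document; each statement's English description precedes it below -/
import Mathlib

section
/- Let m and n be natural numbers and let A be an m × n matrix with integer entries such that every row of A is either of the form e_i − e_j for some indices i ≠ j, or of the form e_i for some index i, or of the form −e_j for some index j (where e_k denotes the k-th standard unit row vector in ℤ^n). Then A is totally unimodular, i.e., every square submatrix of A has determinant equal to −1, 0, or 1. -/
/-! A square submatrix either has a row meeting the chosen columns in a single entry `±1`, and then
Laplace expansion along that row reduces to a smaller submatrix, or every row restricted to the
chosen columns is `0` or `eᵢ - eⱼ`, and then the columns sum to zero, so the determinant vanishes. -/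

section
variable {ι n R : Type*} [DecidableEq ι] [DecidableEq n] [Zero R]

theorem Pi.single_comp_of_injective {g : ι → n} (hg : g.Injective) (c : ι) (x : R) :
    Pi.single (g c) x ∘ g = Pi.single c x :=
  Function.update_comp_eq_of_injective (0 : n → R) hg c x

theorem Pi.single_comp_eq_single_or_eq_zero {g : ι → n} (hg : g.Injective) (i : n) (x : R) :
    (∃ c, Pi.single i x ∘ g = Pi.single c x) ∨ Pi.single i x ∘ g = 0 := by
  by_cases hi : ∃ c, g c = i
  · obtain ⟨c, rfl⟩ := hi
    exact .inl ⟨c, Pi.single_comp_of_injective hg c x⟩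
  · push Not at hi
    exact .inr (Function.update_comp_eq_of_forall_ne (0 : n → R) x hi)

end

def IsZeroSumOrSignedUnit {ι R : Type*} [Fintype ι] [DecidableEq ι] [AddCommMonoid R] [One R]
    [Neg R] (w : ι → R) : Prop :=
  ∑ c, w c = 0 ∨ ∃ c, ∃ s : SignType, w = Pi.single c (s : R)

section
variable {ι n R : Type*} [Fintype ι] [DecidableEq ι] [DecidableEq n] [Ring R]
  {g : ι → n}

theorem isZeroSumOrSignedUnit_single_comp (hg : g.Injective) (i : n) (s : SignType) :
    IsZeroSumOrSignedUnit (Pi.single i (s : R) ∘ g) := by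
  rcases Pi.single_comp_eq_single_or_eq_zero hg i (s : R) with ⟨c, hc⟩ | hzero
  · exact .inr ⟨c, s, hc⟩
  · exact .inl (by rw [hzero]; simp)

theorem isZeroSumOrSignedUnit_single_sub_single_comp (hg : g.Injective) (i j : n) :
    IsZeroSumOrSignedUnit ((Pi.single i 1 - Pi.single j 1 : n → R) ∘ g) := by
  rw [Pi.sub_comp]
  rcases Pi.single_comp_eq_single_or_eq_zero hg i (1 : R) with ⟨ci, hi⟩ | hi <;>
    rcases Pi.single_comp_eq_single_or_eq_zero hg j (1 : R) with ⟨cj, hj⟩ | hj <;>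
    rw [hi, hj]
  · exact .inl (by simp)
  · exact .inr ⟨ci, 1, by simp⟩
  · exact .inr ⟨cj, -1, by simp [Pi.single_neg]⟩
  · exact .inl (by simp)

end

namespace Matrix

variable {m n R : Type*} [CommRing R]

theorem det_eq_zero_of_forall_row_sum_eq_zero [Fintype n] [DecidableEq n] [Nonempty n]
    {M : Matrix n n R} (h : ∀ i, ∑ j, M i j = 0) : M.det = 0 := by
  obtain ⟨j⟩ := ‹Nonempty n›
  -- Adding all other columns to column `j` does not change the determinant but zeroes it.
  have hcol := det_updateCol_sum M j 1
  simp only [Pi.one_apply, one_smul, h] at hcol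
  rw [← hcol]
  exact det_eq_zero_of_column_eq_zero j fun i => by simp

theorem det_succ_row_of_eq_single {k : ℕ} (M : Matrix (Fin (k + 1)) (Fin (k + 1)) R)
    {r c : Fin (k + 1)} {x : R} (h : M r = Pi.single c x) :
    M.det = (-1) ^ (r + c : ℕ) * x * (M.submatrix r.succAbove c.succAbove).det := by
  rw [det_succ_row M r, Fintype.sum_eq_single c fun b hb => by simp [h, hb]]
  simp [h]

theorem isTotallyUnimodular_of_forall_isZeroSumOrSignedUnit_row_comp {A : Matrix m n R}
    (hA : ∀ (a : m) (k : ℕ) (g : Fin k → n), g.Injective → IsZeroSumOrSignedUnit (A a ∘ g)) :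
    A.IsTotallyUnimodular := by
  intro k f g hf hg
  induction k with
  | zero => exact ⟨1, by simp⟩
  | succ k ih =>
    by_cases hsum : ∀ r, ∑ c, A.submatrix f g r c = 0
    · exact ⟨0, (det_eq_zero_of_forall_row_sum_eq_zero hsum).symm⟩
    push Not at hsum
    obtain ⟨r, hr⟩ := hsum
    obtain ⟨c, s, hrow⟩ := (hA (f r) _ g hg).resolve_left hr
    obtain ⟨t, ht⟩ := ih (f ∘ r.succAbove) (g ∘ c.succAbove)
      (hf.comp Fin.succAbove_right_injective) (hg.comp Fin.succAbove_right_injective)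
    rw [det_succ_row_of_eq_single _ hrow, submatrix_submatrix]
    exact ⟨(-1) ^ (r + c : ℕ) * s * t, by simp [ht]⟩

theorem isTotallyUnimodular_of_rows_eq_single_sub_single_or_single [DecidableEq n]
    {A : Matrix m n R}
    (hA : ∀ a, (∃ i j, A a = Pi.single i 1 - Pi.single j 1) ∨
      ∃ i, ∃ s : SignType, A a = Pi.single i (s : R)) :
    A.IsTotallyUnimodular := by
  refine isTotallyUnimodular_of_forall_isZeroSumOrSignedUnit_row_comp fun a k g hg => ?_
  rcases hA a with ⟨i, j, hrow⟩ | ⟨i, s, hrow⟩ <;> rw [hrow]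
  · exact isZeroSumOrSignedUnit_single_sub_single_comp hg i j
  · exact isZeroSumOrSignedUnit_single_comp hg i s

end Matrix

/-- If every row of an integer matrix `A` is of the form `eᵢ - eⱼ` (`i ≠ j`),
`eᵢ`, or `-eⱼ` (where `eₖ` is a standard unit row vector), then `A` is totally unimodular:
every square submatrix has determinant `-1`, `0`, or `1`. -/
theorem rows_unit_diff_totallyUnimodular (m n : ℕ) (A : Matrix (Fin m) (Fin n) ℤ)
    (hA : ∀ a : Fin m,
      (∃ i j : Fin n, i ≠ j ∧ A a = Pi.single i 1 - Pi.single j 1) ∨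
      (∃ i : Fin n, A a = Pi.single i 1) ∨
      (∃ j : Fin n, A a = -Pi.single j 1)) :
    ∀ (k : ℕ) (f : Fin k → Fin m) (g : Fin k → Fin n),
      Function.Injective f → Function.Injective g →
      (A.submatrix f g).det = -1 ∨ (A.submatrix f g).det = 0 ∨ (A.submatrix f g).det = 1 := by
  have hTU : A.IsTotallyUnimodular := by
    refine Matrix.isTotallyUnimodular_of_rows_eq_single_sub_single_or_single fun a => ?_
    rcases hA a with ⟨i, j, -, hrow⟩ | ⟨i, hrow⟩ | ⟨j, hrow⟩
    · exact .inl ⟨i, j, hrow⟩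
    · exact .inr ⟨i, 1, hrow⟩
    · exact .inr ⟨j, -1, by simp [hrow, Pi.single_neg]⟩
  intro k f g hf hg
  obtain ⟨s, hs⟩ := hTU k f g hf hg
  cases s <;> simp [← hs]
end

section
/- Define c : ℕ → ℤ recursively by c_0 = 1 and, for n ≥ 1, c_n = Σ_{j=1}^{n} (−1)^{j+1} · binom(n+1, j+1) · (n!/(n−j+1)!) · c_{n−j}. Then in the ring of formal power series ℚ⟦X⟧, one has (Σ_{n≥0} ((−1)^n / (n+1)!) X^n) · (Σ_{n≥0} (c_n / (n! · (n+1)!)) X^n) = 1. In other words, the Taylor coefficients b_n of the function h(x) = x/(1−e^{−x}) about x = 0 are b_n = c_n / (n! · (n+1)!), with the integers c_n given by the stated recursion. -/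
/-!
Multiplying the `n`-th coefficient of the product by `n! (n+1)!` makes every term of the Cauchy
product integral: the `j`-th term becomes `(-1)^j C(n+1, j+1) (n!/(n-j+1)!) c_{n-j}`, and the
`j = 0` term is `c_n` itself. So for `n ≥ 1` the recursion says exactly that this scaled
coefficient vanishes.
-/
open PowerSeries Finset
open scoped Nat

theorem cast_choose_mul_factorial_div_factorial {n j : ℕ} (hj₁ : 1 ≤ j) (hjn : j ≤ n) :
    ((n + 1).choose (j + 1) * (n ! / (n - j + 1)! : ℕ) : ℚ) =
      n ! * (n + 1)! / ((j + 1)! * ((n - j)! * (n - j + 1)!)) := by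
  have hchoose := Nat.choose_mul_factorial_mul_factorial (by omega : j + 1 ≤ n + 1)
  rw [Nat.add_sub_add_right] at hchoose
  rw [Nat.cast_div (Nat.factorial_dvd_factorial (by omega)) (by positivity)]
  field_simp
  exact_mod_cast hchoose

/-- The `j = 0` term is split off because the truncated quotient `n ! / (n + 1)!` vanishes. -/
theorem factorial_mul_coeff_mul (a : ℕ → ℚ) (n : ℕ) :
    (n ! * (n + 1)! : ℚ) * coeff n (mk (fun n ↦ (-1 : ℚ) ^ n / (n + 1)!) *
        mk (fun n ↦ a n / (n ! * (n + 1)!))) =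
      a n - ∑ j ∈ Icc 1 n, (-1) ^ (j + 1) *
        ((n + 1).choose (j + 1) : ℚ) * (n ! / (n - j + 1)! : ℕ) * a (n - j) := by
  rw [coeff_mul, Nat.sum_antidiagonal_eq_sum_range_succ_mk, mul_sum,
    sum_range_eq_add_Ico _ n.add_one_pos, Ico_add_one_right_eq_Icc, sub_eq_add_neg,
    ← sum_neg_distrib]
  congr 1
  · simp only [coeff_mk]
    field_simp
    simp [Nat.factorial_succ]
  refine sum_congr rfl fun j hj ↦ ?_
  obtain ⟨hj₁, hjn⟩ := mem_Icc.mp hj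
  rw [mul_assoc ((-1 : ℚ) ^ (j + 1)), cast_choose_mul_factorial_div_factorial hj₁ hjn]
  simp only [coeff_mk]
  field_simp
  ring

/-- With `c : ℕ → ℤ` defined by `c 0 = 1` and the stated recursion,
the formal power series `∑ ((-1)^n/(n+1)!) Xⁿ` and `∑ (cₙ/(n!·(n+1)!)) Xⁿ` in `ℚ⟦X⟧`
are mutually inverse; i.e. the Taylor coefficients of `x/(1 - e^{-x})` are `cₙ/(n!(n+1)!)`. -/
theorem powerSeries_inverse_toddy (c : ℕ → ℤ) (hc0 : c 0 = 1)
    (hcrec : ∀ n : ℕ, 1 ≤ n →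
      c n = ∑ j ∈ Finset.Icc 1 n,
        (-1 : ℤ) ^ (j + 1) * ((n + 1).choose (j + 1) : ℤ) *
          ((n.factorial / (n - j + 1).factorial : ℕ) : ℤ) * c (n - j)) :
    (PowerSeries.mk fun n => ((-1 : ℚ) ^ n / ((n + 1).factorial : ℚ))) *
      (PowerSeries.mk fun n => (c n : ℚ) / ((n.factorial : ℚ) * ((n + 1).factorial : ℚ)))
      = 1 := by
  ext n
  rcases Nat.eq_zero_or_pos n with rfl | hn
  · simp [hc0]
  · have hcoeff := factorial_mul_coeff_mul (fun n ↦ (c n : ℚ)) n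
    have hrec : (c n : ℚ) = ∑ j ∈ Icc 1 n, (-1) ^ (j + 1) *
        ((n + 1).choose (j + 1) : ℚ) * (n ! / (n - j + 1)! : ℕ) * c (n - j) := by
      rw [hcrec n hn]
      push_cast
      rfl
    rw [← hrec, sub_self] at hcoeff
    simpa [coeff_one, hn.ne', Nat.factorial_ne_zero] using hcoeff
end

section
/- Define c : ℕ → ℤ recursively by c_0 = 1 and, for n ≥ 1, c_n = Σ_{j=1}^{n} (−1)^{j+1} · binom(n+1, j+1) · (n!/(n−j+1)!) · c_{n−j}. Then for every n ≥ 0, |c_n| ≤ ((n+1)!)^{2n}. -/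
/-!
Strong induction on `n`. Bounding the descending factorial by `n!` and every earlier `|c_k|` by
`((n+1)!)^(2(n-1))`, the triangle inequality gives `|c_n| ≤ 2^(n+1) · n! · ((n+1)!)^(2(n-1))`,
since the binomial coefficients sum to at most `2^(n+1)`; and `2^(n+1) · n! ≤ ((n+1)!)^2`.
-/

open Finset Nat

lemma sum_Icc_one_choose_succ_le (n : ℕ) :
    ∑ j ∈ Icc 1 n, (n + 1).choose (j + 1) ≤ 2 ^ (n + 1) := by
  calc ∑ j ∈ Icc 1 n, (n + 1).choose (j + 1)
      = ∑ k ∈ Icc 2 (n + 1), (n + 1).choose k := by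
        rw [← map_add_right_Icc 1 n 1, sum_map]
        rfl
    _ ≤ ∑ k ∈ range (n + 2), (n + 1).choose k :=
        sum_le_sum_of_subset fun k hk => by
          simp only [mem_Icc, mem_range] at hk ⊢
          omega
    _ = 2 ^ (n + 1) := sum_range_choose (n + 1)

lemma two_pow_succ_mul_factorial_le_sq {n : ℕ} (hn : 1 ≤ n) :
    2 ^ (n + 1) * n ! ≤ (n + 1)! ^ 2 := by
  have hpow : 2 ^ n ≤ (n + 1)! := by
    simpa [add_comm] using factorial_mul_pow_le_factorial (m := 1) (n := n)
  have hfact : 2 * n ! ≤ (n + 1)! := by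
    rw [factorial_succ]
    exact Nat.mul_le_mul_right _ (by omega)
  calc 2 ^ (n + 1) * n ! = 2 ^ n * (2 * n !) := by ring
    _ ≤ (n + 1)! * (n + 1)! := Nat.mul_le_mul hpow hfact
    _ = (n + 1)! ^ 2 := (sq _).symm

lemma factorial_pow_le_factorial_pow {a b i j : ℕ} (hab : a ≤ b) (hij : i ≤ j) :
    a ! ^ i ≤ b ! ^ j :=
  (Nat.pow_le_pow_left (factorial_le hab) i).trans
    (Nat.pow_le_pow_right (factorial_pos b) hij)

lemma abs_sum_recursion_le (c : ℕ → ℤ) (n : ℕ) {M : ℤ} (hM : 0 ≤ M)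
    (hc : ∀ k < n, |c k| ≤ M) :
    |∑ j ∈ Icc 1 n, (-1 : ℤ) ^ (j + 1) * ((n + 1).choose (j + 1) : ℤ) *
        ((n ! / (n - j + 1)! : ℕ) : ℤ) * c (n - j)|
      ≤ 2 ^ (n + 1) * n ! * M := by
  have hterm : ∀ j ∈ Icc 1 n,
      |(-1 : ℤ) ^ (j + 1) * ((n + 1).choose (j + 1) : ℤ) *
          ((n ! / (n - j + 1)! : ℕ) : ℤ) * c (n - j)|
        ≤ ((n + 1).choose (j + 1) : ℤ) * (n ! * M) := by
    intro j hj
    obtain ⟨hj1, hjn⟩ := mem_Icc.mp hj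
    have hdesc : ((n ! / (n - j + 1)! : ℕ) : ℤ) ≤ n ! := by
      exact_mod_cast Nat.div_le_self _ _
    simp only [abs_mul, abs_pow, abs_neg, abs_one, one_pow, one_mul, Nat.abs_cast]
    rw [mul_assoc]
    gcongr
    exact hc _ (by omega)
  calc _ ≤ ∑ j ∈ Icc 1 n, |(-1 : ℤ) ^ (j + 1) * ((n + 1).choose (j + 1) : ℤ) *
          ((n ! / (n - j + 1)! : ℕ) : ℤ) * c (n - j)| := abs_sum_le_sum_abs _ _
    _ ≤ ∑ j ∈ Icc 1 n, ((n + 1).choose (j + 1) : ℤ) * (n ! * M) := sum_le_sum hterm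
    _ = ((∑ j ∈ Icc 1 n, (n + 1).choose (j + 1) : ℕ) : ℤ) * (n ! * M) := by
        rw [← sum_mul]
        push_cast
        rfl
    _ ≤ 2 ^ (n + 1) * (n ! * M) := by
        gcongr
        exact_mod_cast sum_Icc_one_choose_succ_le n
    _ = 2 ^ (n + 1) * n ! * M := (mul_assoc _ _ _).symm

/-- With `c : ℕ → ℤ` defined by `c 0 = 1` and the stated recursion,
`|cₙ| ≤ ((n+1)!)^(2n)` for every `n`. -/
theorem c_abs_le (c : ℕ → ℤ) (hc0 : c 0 = 1)
    (hcrec : ∀ n : ℕ, 1 ≤ n →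
      c n = ∑ j ∈ Finset.Icc 1 n,
        (-1 : ℤ) ^ (j + 1) * ((n + 1).choose (j + 1) : ℤ) *
          ((n.factorial / (n - j + 1).factorial : ℕ) : ℤ) * c (n - j)) :
    ∀ n : ℕ, |c n| ≤ (((n + 1).factorial : ℤ)) ^ (2 * n) := by
  intro n
  induction n using Nat.strong_induction_on with
  | _ n ih =>
    rcases n with _ | m
    · simp [hc0]
    set n := m + 1
    have hc : ∀ k < n, |c k| ≤ ((n + 1)! : ℤ) ^ (2 * m) := fun k hk =>
      (ih k hk).trans <| by
        exact_mod_cast factorial_pow_le_factorial_pow (a := k + 1) (b := n + 1)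
          (i := 2 * k) (j := 2 * m) (by omega) (by omega)
    calc |c n| ≤ 2 ^ (n + 1) * n ! * ((n + 1)! : ℤ) ^ (2 * m) :=
          hcrec n (by omega) ▸ abs_sum_recursion_le c n (by positivity) hc
      _ ≤ ((n + 1)! : ℤ) ^ 2 * ((n + 1)! : ℤ) ^ (2 * m) := by
          gcongr
          exact_mod_cast two_pow_succ_mul_factorial_le_sq (by omega)
      _ = ((n + 1)! : ℤ) ^ (2 * n) := by rw [← pow_add]; congr 1; omega
end

section
/- For all positive integers n and r, the vector of Katzman coefficients (A_0^{n,r}, A_1^{n,r}, …, A_{n(r−1)}^{n,r}) is unimodal: there exists an index p with 0 ≤ p ≤ n(r−1) such that A_i^{n,r} ≤ A_j^{n,r} whenever 0 ≤ i ≤ j ≤ p, and A_i^{n,r} ≥ A_j^{n,r} whenever p ≤ i ≤ j ≤ n(r−1). -/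
/-!
Extend the coefficients by zero to `ℤ`. Multiplication by `1 + T + ⋯ + T^r` turns a sequence `f`
into its sums over windows of length `r + 1`, and this preserves being symmetric about `N / 2` and
increasing up to the centre (with `N` shifted by `r`): moving the window one step adds
`f (z + 1) - f (z - r)`, which is nonnegative on the left half, because either `z + 1` is itself
left of the centre of `f` or its mirror image `N - (z + 1)` is, and lies between `z - r` and it.
-/

open Polynomial Finset

/-- The Katzman coefficient `A_i^{n,r}`: the coefficient of `T^i` in `(1 + T + ⋯ + T^(r-1))^n`. -/
noncomputable def katz (n r i : ℕ) : ℕ :=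
  ((∑ j ∈ Finset.range r, (Polynomial.X : Polynomial ℕ) ^ j) ^ n).coeff i

/-- `f` is symmetric about `N / 2` and increasing up to `⌈N / 2⌉`. -/
structure IsSymmUnimodal {β : Type*} [Preorder β] (N : ℤ) (f : ℤ → β) : Prop where
  symm : ∀ z, f (N - z) = f z
  monotoneOn : MonotoneOn f (Set.Iic ((N + 1) / 2))

section windowSum

variable {β : Type*} [AddCommMonoid β]

def windowSum (r : ℕ) (f : ℤ → β) (z : ℤ) : β :=
  ∑ k ∈ range r, f (z - k)

theorem windowSum_succ' (r : ℕ) (f : ℤ → β) (z : ℤ) :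
    windowSum (r + 1) f (z + 1) = f (z + 1) + windowSum r f z := by
  rw [windowSum, sum_range_succ', windowSum, add_comm, Nat.cast_zero, sub_zero]
  congr 1
  exact sum_congr rfl fun k _ => by push_cast; ring_nf

theorem windowSum_succ (r : ℕ) (f : ℤ → β) (z : ℤ) :
    windowSum (r + 1) f z = windowSum r f z + f (z - r) :=
  sum_range_succ _ _

end windowSum

namespace IsSymmUnimodal

variable {β : Type*}

theorem antitoneOn [Preorder β] {N : ℤ} {f : ℤ → β} (hf : IsSymmUnimodal N f) :
    AntitoneOn f (Set.Ici (N / 2)) := by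
  intro x hx y hy hxy
  rw [← hf.symm x, ← hf.symm y]
  rw [Set.mem_Ici] at hx hy
  exact hf.monotoneOn (Set.mem_Iic.2 (by omega)) (Set.mem_Iic.2 (by omega)) (by omega)

theorem single_zero [AddMonoid β] [Preorder β] {b : β} (hb : 0 ≤ b) :
    IsSymmUnimodal 0 (Pi.single 0 b) where
  symm z := by simp only [Pi.single_apply, zero_sub, neg_eq_zero]
  monotoneOn x hx y hy hxy := by
    simp only [Set.mem_Iic] at hx hy
    obtain rfl | hy0 := eq_or_ne y 0
    · obtain rfl | hx0 := eq_or_ne x 0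
      · rfl
      · simpa [Pi.single_apply, hx0] using hb
    · simp [hy0, show x ≠ 0 by omega]

theorem windowSum [AddCommMonoid β] [PartialOrder β] [IsOrderedAddMonoid β] {N : ℤ}
    {f : ℤ → β} (hf : IsSymmUnimodal N f) (r : ℕ) :
    IsSymmUnimodal (N + r) (windowSum (r + 1) f) where
  symm z := by
    rw [_root_.windowSum, ← sum_range_reflect]
    refine sum_congr rfl fun k hk => ?_
    rw [← hf.symm]
    congr 1
    have := mem_range.1 hk
    omega
  monotoneOn := by
    refine monotoneOn_of_le_add_one Set.ordConnected_Iic fun z _ _ hz => ?_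
    rw [windowSum_succ', windowSum_succ, add_comm]
    refine add_le_add_left ?_ _
    rw [Set.mem_Iic] at hz
    by_cases hcentre : z + 1 ≤ (N + 1) / 2
    · exact hf.monotoneOn (Set.mem_Iic.2 (by omega)) (by simpa using hcentre) (by omega)
    · rw [← hf.symm (z + 1)]
      exact hf.monotoneOn (Set.mem_Iic.2 (by omega)) (Set.mem_Iic.2 (by omega)) (by omega)

end IsSymmUnimodal

noncomputable def katzInt (n r : ℕ) (z : ℤ) : ℕ :=
  if 0 ≤ z then katz n r z.toNat else 0

theorem katzInt_natCast (n r i : ℕ) : katzInt n r i = katz n r i := by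
  simp [katzInt]

theorem katzInt_zero (r : ℕ) : katzInt 0 r = Pi.single 0 1 := by
  ext z
  simp only [katzInt, katz, pow_zero, coeff_one, Pi.single_apply]
  split_ifs <;> omega

theorem katz_succ (n r i : ℕ) :
    katz (n + 1) r i = ∑ j ∈ range r, if j ≤ i then katz n r (i - j) else 0 := by
  simp only [katz, pow_succ, mul_sum, finsetSum_coeff, coeff_mul_X_pow']

theorem katzInt_succ (n r : ℕ) : katzInt (n + 1) r = windowSum r (katzInt n r) := by
  ext z
  rw [windowSum]
  by_cases hz : 0 ≤ z
  · rw [katzInt, if_pos hz, katz_succ]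
    refine sum_congr rfl fun j _ => ?_
    by_cases hj : (j : ℤ) ≤ z
    · rw [if_pos (by omega), katzInt, if_pos (by omega)]
      congr 1
      omega
    · rw [if_neg (by omega), katzInt, if_neg (by omega)]
  · rw [katzInt, if_neg hz]
    exact (sum_eq_zero fun j _ => if_neg (by omega)).symm

theorem katzInt_isSymmUnimodal (n r : ℕ) : IsSymmUnimodal (n * r : ℕ) (katzInt n (r + 1)) := by
  induction n with
  | zero => simpa [katzInt_zero] using IsSymmUnimodal.single_zero zero_le_one
  | succ n ih =>
    rw [katzInt_succ, Nat.succ_mul, Nat.cast_add]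
    exact ih.windowSum r

theorem katz_unimodal_general (n r : ℕ) (hr : 1 ≤ r) :
    ∃ p : ℕ, p ≤ n * (r - 1) ∧
      (∀ i j : ℕ, i ≤ j → j ≤ p → katz n r i ≤ katz n r j) ∧
      (∀ i j : ℕ, p ≤ i → i ≤ j → j ≤ n * (r - 1) → katz n r j ≤ katz n r i) := by
  obtain ⟨r, rfl⟩ := Nat.exists_eq_add_of_le' hr
  have hunimodal := katzInt_isSymmUnimodal n r
  simp only [Nat.add_sub_cancel]
  generalize n * r = N at hunimodal ⊢
  refine ⟨N / 2, Nat.div_le_self _ _, fun i j hij hj => ?_, fun i j hi hij _ => ?_⟩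
  · rw [← katzInt_natCast, ← katzInt_natCast]
    exact hunimodal.monotoneOn (Set.mem_Iic.2 (by omega)) (Set.mem_Iic.2 (by omega)) (by omega)
  · rw [← katzInt_natCast, ← katzInt_natCast]
    exact hunimodal.antitoneOn (Set.mem_Ici.2 (by omega)) (Set.mem_Ici.2 (by omega)) (by omega)

/-- The vector `(A_0^{n,r}, …, A_{n(r-1)}^{n,r})` of Katzman coefficients
is unimodal. -/
theorem katz_unimodal (n r : ℕ) (hn : 1 ≤ n) (hr : 1 ≤ r) :
    ∃ p : ℕ, p ≤ n * (r - 1) ∧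
      (∀ i j : ℕ, i ≤ j → j ≤ p → katz n r i ≤ katz n r j) ∧
      (∀ i j : ℕ, p ≤ i → i ≤ j → j ≤ n * (r - 1) → katz n r j ≤ katz n r i) :=
  katz_unimodal_general n r hr
end

section
/- For every fixed natural number g, there exists a polynomial P ∈ ℚ[X] of degree exactly g with positive leading coefficient such that A_g^{n,3} = P(n) for every integer n ≥ g. That is, for fixed g, the rank-three Katzman coefficient A_g^{n,3} is a polynomial of degree g in the variable n with positive leading coefficient. -/
/-!
Writing `1 + T + T² = 1 + T(1 + T)` and expanding binomially gives
`A_g^{n,3} = ∑_{j ≤ g} C(n, j) C(j, g - j)`. Each `C(n, j)` is the value at `n` of the polynomial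
`X(X - 1)⋯(X - j + 1) / j!` of degree `j`, so `A_g^{n,3}` is a polynomial in `n` whose only term
of degree `g` is the `j = g` one, with leading coefficient `1 / g!`.
-/

open Polynomial Finset Nat

section ChoosePoly

variable (K : Type*) [Field K]

noncomputable def choosePoly (k : ℕ) : K[X] :=
  C (k ! : K)⁻¹ * descPochhammer K k

theorem eval_choosePoly [CharZero K] (n k : ℕ) : (choosePoly K k).eval (n : K) = n.choose k := by
  rw [choosePoly, eval_C_mul, cast_choose_eq_descPochhammer_div, inv_mul_eq_div]

theorem degree_choosePoly [CharZero K] (k : ℕ) : (choosePoly K k).degree = k := by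
  rw [choosePoly, degree_C_mul (inv_ne_zero (cast_ne_zero.2 k.factorial_ne_zero)),
    degree_eq_natDegree (monic_descPochhammer K k).ne_zero, descPochhammer_natDegree]

theorem leadingCoeff_choosePoly (k : ℕ) : (choosePoly K k).leadingCoeff = (k ! : K)⁻¹ := by
  rw [choosePoly, leadingCoeff_mul, leadingCoeff_C, (monic_descPochhammer K k).leadingCoeff,
    mul_one]

theorem degree_sum_smul_choosePoly_lt [CharZero K] (a : ℕ → K) (g : ℕ) :
    (∑ j ∈ range g, a j • choosePoly K j).degree < g := by
  refine (degree_sum_le _ _).trans_lt ((Finset.sup_lt_iff (WithBot.bot_lt_coe g)).2 fun j hj ↦ ?_)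
  refine (degree_smul_le _ _).trans_lt ?_
  rw [degree_choosePoly]
  exact WithBot.coe_lt_coe.2 (mem_range.1 hj)

end ChoosePoly

theorem coeff_X_mul_one_add_X_pow {R : Type*} [CommSemiring R] (m g : ℕ) :
    ((X * (1 + X)) ^ m : R[X]).coeff g = if m ≤ g then (m.choose (g - m) : R) else 0 := by
  rw [mul_pow, coeff_X_pow_mul', coeff_one_add_X_pow]

theorem katz_three_eq_sum (n g : ℕ) :
    katz n 3 g = ∑ j ∈ range (g + 1), n.choose j * j.choose (g - j) := by
  have h : ∑ j ∈ range 3, (X : ℕ[X]) ^ j = X * (1 + X) + 1 := by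
    simp only [sum_range_succ, sum_range_zero]; ring
  rw [katz, h, add_pow, finsetSum_coeff]
  simp only [one_pow, mul_one, ← C_eq_natCast, coeff_mul_C, coeff_X_mul_one_add_X_pow]
  set f : ℕ → ℕ := fun j ↦ (if j ≤ g then j.choose (g - j) else 0) * n.choose j
  calc ∑ j ∈ range (n + 1), f j = ∑ j ∈ range (n + g + 1), f j :=
        sum_subset (range_subset_range.2 (by omega)) fun j _ hj ↦ by
          simp only [mem_range, not_lt] at hj
          simp only [f, choose_eq_zero_of_lt (show n < j by omega), mul_zero]
    _ = ∑ j ∈ range (g + 1), f j :=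
        (sum_subset (range_subset_range.2 (by omega)) fun j _ hj ↦ by
          simp only [mem_range, not_lt] at hj
          simp only [f, if_neg (show ¬j ≤ g by omega), zero_mul]).symm
    _ = _ := sum_congr rfl fun j hj ↦ by
          rw [mem_range] at hj
          simp only [f, if_pos (show j ≤ g by omega), mul_comm]

noncomputable def katzThreePoly (g : ℕ) : ℚ[X] :=
  ∑ j ∈ range (g + 1), (j.choose (g - j) : ℚ) • choosePoly ℚ j

theorem eval_katzThreePoly (g n : ℕ) : (katzThreePoly g).eval (n : ℚ) = katz n 3 g := by
  simp only [katzThreePoly, katz_three_eq_sum, eval_finsetSum, eval_smul, eval_choosePoly,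
    smul_eq_mul, cast_sum, cast_mul, mul_comm]

theorem katzThreePoly_eq_choosePoly_add (g : ℕ) :
    katzThreePoly g = choosePoly ℚ g + ∑ j ∈ range g, (j.choose (g - j) : ℚ) • choosePoly ℚ j := by
  rw [katzThreePoly, sum_range_succ, Nat.sub_self, choose_zero_right, cast_one, one_smul, add_comm]

theorem degree_katzThreePoly (g : ℕ) : (katzThreePoly g).degree = g := by
  rw [katzThreePoly_eq_choosePoly_add, degree_add_eq_left_of_degree_lt, degree_choosePoly]
  rw [degree_choosePoly]
  exact degree_sum_smul_choosePoly_lt ℚ _ g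

theorem leadingCoeff_katzThreePoly (g : ℕ) : (katzThreePoly g).leadingCoeff = (g ! : ℚ)⁻¹ := by
  rw [katzThreePoly_eq_choosePoly_add, leadingCoeff_add_of_degree_lt', leadingCoeff_choosePoly]
  rw [degree_choosePoly]
  exact degree_sum_smul_choosePoly_lt ℚ _ g

/-- For fixed `g`, the rank-three Katzman coefficient `A_g^{n,3}` is a
polynomial of degree exactly `g` in `n`, with positive leading coefficient, for all `n ≥ g`. -/
theorem katz_three_polynomial_in_n (g : ℕ) :
    ∃ P : Polynomial ℚ, P.degree = g ∧ 0 < P.leadingCoeff ∧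
      ∀ n : ℕ, g ≤ n → (katz n 3 g : ℚ) = P.eval (n : ℚ) :=
  ⟨katzThreePoly g, degree_katzThreePoly g, by rw [leadingCoeff_katzThreePoly]; positivity,
    fun n _ ↦ (eval_katzThreePoly g n).symm⟩
end

section
/- Let n ≥ 3 be an integer and define the integer sequence h : ℕ → ℤ by h(l) = binom(n, 2l) − n if l = 1, and h(l) = binom(n, 2l) otherwise. Then the sequence (h(0), h(1), …, h(⌊n/2⌋)) is unimodal: there exists an index p with 0 ≤ p ≤ ⌊n/2⌋ such that h(i) ≤ h(j) whenever 0 ≤ i ≤ j ≤ p, and h(i) ≥ h(j) whenever p ≤ i ≤ j ≤ ⌊n/2⌋. (This sequence is the h*-vector of the matroid polytope of the uniform matroid U^{2,n}, whose h*-polynomial is (Σ_{l≥0} binom(n,2l) T^l) − n T.) -/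
theorem Nat.choose_le_choose_of_le_half {n a b : ℕ} (hab : a ≤ b) (hb : b ≤ n / 2) :
    n.choose a ≤ n.choose b :=
  monotoneOn_of_le_add_one (f := n.choose) Set.ordConnected_Iic
    (fun _ _ _ hr ↦ Nat.choose_le_succ_of_lt_half_left (Nat.lt_of_succ_le hr)) (hab.trans hb) hb hab

theorem Nat.choose_le_choose_of_le_of_le_sub {n a b : ℕ} (hab : a ≤ b) (hbn : b ≤ n - a) :
    n.choose a ≤ n.choose b := by
  rcases le_or_gt b (n / 2) with hb | hb
  · exact Nat.choose_le_choose_of_le_half hab hb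
  · rw [← Nat.choose_symm (by omega : b ≤ n)]
    exact Nat.choose_le_choose_of_le_half (by omega) (by omega)

theorem Nat.choose_le_choose_add_two {n k : ℕ} (h : 2 * k + 2 ≤ n) :
    n.choose k ≤ n.choose (k + 2) :=
  Nat.choose_le_choose_of_le_of_le_sub (by omega) (by omega)

theorem Nat.choose_add_two_le_choose {n k : ℕ} (h : n ≤ 2 * k + 2) :
    n.choose (k + 2) ≤ n.choose k := by
  rcases le_or_gt (k + 2) n with hk | hk
  · rw [← Nat.choose_symm hk]
    exact Nat.choose_le_choose_of_le_of_le_sub (by omega) (by omega)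
  · simp [Nat.choose_eq_zero_of_lt hk]

theorem Nat.add_one_le_choose_two {n : ℕ} (hn : 4 ≤ n) : n + 1 ≤ n.choose 2 := by
  obtain ⟨m, rfl⟩ : ∃ m, n = m + 4 := ⟨n - 4, by omega⟩
  rw [Nat.choose_two_right, Nat.le_div_iff_mul_le two_pos, Nat.add_sub_assoc (by omega)]
  nlinarith

def hstarU2n (n l : ℕ) : ℤ :=
  if l = 1 then (n.choose (2 * l) : ℤ) - n else (n.choose (2 * l) : ℤ)

theorem hstarU2n_of_ne_one {n l : ℕ} (hl : l ≠ 1) : hstarU2n n l = n.choose (2 * l) :=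
  if_neg hl

theorem hstarU2n_le_choose (n l : ℕ) : hstarU2n n l ≤ n.choose (2 * l) := by
  unfold hstarU2n
  split_ifs <;> omega

theorem hstarU2n_zero_le_one {n : ℕ} (hn : 4 ≤ n) : hstarU2n n 0 ≤ hstarU2n n 1 := by
  have := Nat.add_one_le_choose_two hn
  simp only [hstarU2n, if_pos, if_neg zero_ne_one, mul_zero, mul_one, Nat.choose_zero_right]
  omega

theorem hstarU2n_le_succ {n l : ℕ} (hl : l ≠ 0) (hln : 4 * l + 2 ≤ n) :
    hstarU2n n l ≤ hstarU2n n (l + 1) :=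
  calc hstarU2n n l ≤ n.choose (2 * l) := hstarU2n_le_choose n l
    _ ≤ n.choose (2 * l + 2) := by exact_mod_cast Nat.choose_le_choose_add_two (by omega)
    _ = hstarU2n n (l + 1) := by rw [hstarU2n_of_ne_one (by omega)]; rfl

theorem hstarU2n_succ_le {n l : ℕ} (hl : l ≠ 1) (hln : n ≤ 4 * l + 2) :
    hstarU2n n (l + 1) ≤ hstarU2n n l :=
  calc hstarU2n n (l + 1) ≤ n.choose (2 * l + 2) := hstarU2n_le_choose n (l + 1)
    _ ≤ n.choose (2 * l) := by exact_mod_cast Nat.choose_add_two_le_choose (by omega)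
    _ = hstarU2n n l := (hstarU2n_of_ne_one hl).symm

/-- `C(n, 2l)` increases while `4l + 2 ≤ n` and decreases afterwards, so for `n ≥ 4` the
peak is `⌊(n + 2) / 4⌋`; the correction `-n` at `l = 1` only matters for `n ≤ 5`,
and for `n = 3` it moves the peak to `0`. -/
theorem exists_peak_hstarU2n {n : ℕ} (hn : 3 ≤ n) :
    ∃ p ≤ n / 2, MonotoneOn (hstarU2n n) (Set.Iic p) ∧ AntitoneOn (hstarU2n n) (Set.Ici p) := by
  obtain rfl | hn4 := hn.eq_or_lt
  · refine ⟨0, by norm_num, Set.Subsingleton.monotoneOn _ fun _ ha _ hb ↦ by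
      rw [Set.mem_Iic, Nat.le_zero] at ha hb; rw [ha, hb],
      antitoneOn_nat_Ici_of_succ_le fun l _ ↦ ?_⟩
    rcases l with _ | _ | l
    · decide
    · decide
    · exact hstarU2n_succ_le (by omega) (by omega)
  refine ⟨(n + 2) / 4, by omega, monotoneOn_of_le_add_one Set.ordConnected_Iic
    fun l _ _ hl ↦ ?_, antitoneOn_nat_Ici_of_succ_le fun l hl ↦ ?_⟩
  · rw [Set.mem_Iic] at hl
    rcases Nat.eq_zero_or_pos l with rfl | hl0
    · exact hstarU2n_zero_le_one hn4
    · exact hstarU2n_le_succ hl0.ne' (by omega)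
  · obtain rfl | hl1 := eq_or_ne l 1
    · have hn5 : n ≤ 5 := by omega
      interval_cases n <;> decide
    · exact hstarU2n_succ_le hl1 (by omega)

/-- For `n ≥ 3` the sequence `h(l) = C(n,2l) - n·[l = 1]` (the `h*`-vector
of the matroid polytope of the uniform matroid `U^{2,n}`) is unimodal on `0 ≤ l ≤ ⌊n/2⌋`. -/
theorem hstar_U2n_unimodal (n : ℕ) (hn : 3 ≤ n) (h : ℕ → ℤ)
    (hh : ∀ l : ℕ, h l =
      if l = 1 then (n.choose (2 * l) : ℤ) - n else (n.choose (2 * l) : ℤ)) :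
    ∃ p : ℕ, p ≤ n / 2 ∧
      (∀ i j : ℕ, i ≤ j → j ≤ p → h i ≤ h j) ∧
      (∀ i j : ℕ, p ≤ i → i ≤ j → j ≤ n / 2 → h j ≤ h i) := by
  obtain rfl : h = hstarU2n n := funext hh
  obtain ⟨p, hp, hmono, hanti⟩ := exists_peak_hstarU2n hn
  exact ⟨p, hp, fun i j hij hj ↦ hmono (hij.trans hj) hj hij,
    fun i j hi hij _ ↦ hanti hi (hi.trans hij) hij⟩
end

section
/- For integers n ≥ 1 and l ≥ 0, define H(n, l) = A_{3l}^{n,3} − n·binom(n, 2l−1) + [l = 2]·binom(n, 2), where binom(n, 2l−1) is interpreted as 0 when l = 0 and [l = 2] equals 1 if l = 2 and 0 otherwise. Then for every natural number I there exists a natural number N(I) such that for all n ≥ N(I), the sequence H(n, 0), H(n, 1), …, H(n, I) is nondecreasing: H(n, l−1) ≤ H(n, l) for all 1 ≤ l ≤ I. (The numbers H(n, l) are the entries of the h*-vector of the matroid polytope of the uniform matroid U^{3,n}; thus the h*-vector of U^{3,n} is nondecreasing from index 0 to I for all sufficiently large n.) -/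
open Filter Nat Polynomial

namespace Polynomial

variable {R : Type*} [CommSemiring R] [PartialOrder R] [CanonicallyOrderedAdd R] [IsOrderedRing R]

theorem coeff_mul_le_coeff_mul {p q p' q' : R[X]} (h : ∀ i, p.coeff i ≤ q.coeff i)
    (h' : ∀ i, p'.coeff i ≤ q'.coeff i) (i : ℕ) : (p * p').coeff i ≤ (q * q').coeff i := by
  simp only [coeff_mul]
  exact Finset.sum_le_sum fun x _ => mul_le_mul' (h x.1) (h' x.2)

theorem coeff_pow_le_coeff_pow {p q : R[X]} (h : ∀ i, p.coeff i ≤ q.coeff i) (n i : ℕ) :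
    (p ^ n).coeff i ≤ (q ^ n).coeff i := by
  induction n generalizing i with
  | zero => rfl
  | succ n ih => simpa only [pow_succ] using coeff_mul_le_coeff_mul ih h i

theorem coeff_sum_range_X_pow {S : Type*} [Semiring S] (r i : ℕ) :
    (∑ j ∈ Finset.range r, (X : S[X]) ^ j).coeff i = if i < r then 1 else 0 := by
  simp [coeff_X_pow]

end Polynomial

theorem choose_le_katz {r : ℕ} (hr : 2 ≤ r) (n i : ℕ) : n.choose i ≤ katz n r i := by
  rw [← Nat.cast_id (n.choose i), ← coeff_one_add_X_pow ℕ]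
  refine coeff_pow_le_coeff_pow (fun j => ?_) n i
  rw [← pow_one (1 + X), coeff_one_add_X_pow, coeff_sum_range_X_pow, Nat.cast_id]
  rcases j with _ | _ | j <;>
    simp [Nat.choose_succ_succ, show 0 < r by omega, show 1 < r by omega]

theorem katz_le_choose (r n i : ℕ) : katz n r i ≤ ((r - 1) * n).choose i := by
  rw [← Nat.cast_id (Nat.choose _ _), ← coeff_one_add_X_pow ℕ, pow_mul]
  refine coeff_pow_le_coeff_pow (fun j => ?_) n i
  rw [coeff_sum_range_X_pow, coeff_one_add_X_pow, Nat.cast_id]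
  split_ifs with h
  · exact Nat.choose_pos (by omega)
  · exact Nat.zero_le _

theorem Nat.pow_le_two_pow_mul_factorial_mul_choose {n k : ℕ} (h : 2 * k ≤ n) :
    n ^ k ≤ 2 ^ k * (k ! * n.choose k) :=
  calc n ^ k ≤ (2 * (n + 1 - k)) ^ k := Nat.pow_le_pow_left (by omega) k
    _ = 2 ^ k * (n + 1 - k) ^ k := Nat.mul_pow ..
    _ ≤ 2 ^ k * (k ! * n.choose k) := by
      rw [← descFactorial_eq_factorial_mul_choose]
      gcongr
      exact pow_sub_le_descFactorial n k

theorem Nat.eventually_mul_pow_pred_le_choose {k : ℕ} (hk : 1 ≤ k) (c : ℕ) :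
    ∀ᶠ n in atTop, c * n ^ (k - 1) ≤ n.choose k := by
  filter_upwards [eventually_ge_atTop (c * 2 ^ k * k ! + 2 * k)] with n hn
  refine Nat.le_of_mul_le_mul_left ?_ (by positivity : 0 < 2 ^ k * k !)
  calc 2 ^ k * k ! * (c * n ^ (k - 1)) = c * 2 ^ k * k ! * n ^ (k - 1) := by ring
    _ ≤ n * n ^ (k - 1) := by gcongr; omega
    _ = n ^ k := by rw [← pow_succ']; congr 1; omega
    _ ≤ 2 ^ k * (k ! * n.choose k) := pow_le_two_pow_mul_factorial_mul_choose (by omega)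
    _ = 2 ^ k * k ! * n.choose k := by ring

theorem lower_terms_le_mul_pow {l n : ℕ} (hl : 1 ≤ l) (hn : 1 ≤ n) :
    (2 * n).choose (3 * l - 3) + n * n.choose (2 * l - 1) + n.choose 2 ≤
      (2 ^ (3 * l) + 2) * n ^ (3 * l - 1) := by
  have h₁ : (2 * n).choose (3 * l - 3) ≤ 2 ^ (3 * l) * n ^ (3 * l - 1) :=
    calc (2 * n).choose (3 * l - 3) ≤ (2 * n) ^ (3 * l - 3) := choose_le_pow ..
      _ = 2 ^ (3 * l - 3) * n ^ (3 * l - 3) := Nat.mul_pow ..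
      _ ≤ 2 ^ (3 * l) * n ^ (3 * l - 1) := by gcongr <;> omega
  have h₂ : n * n.choose (2 * l - 1) ≤ n ^ (3 * l - 1) :=
    calc n * n.choose (2 * l - 1) ≤ n * n ^ (2 * l - 1) := by gcongr; exact choose_le_pow ..
      _ = n ^ (2 * l) := by rw [← pow_succ']; congr 1; omega
      _ ≤ n ^ (3 * l - 1) := by gcongr; omega
  have h₃ : n.choose 2 ≤ n ^ (3 * l - 1) :=
    (choose_le_pow ..).trans (by gcongr; omega)
  linarith

theorem eventually_katz_add_lower_terms_le_katz {l : ℕ} (hl : 1 ≤ l) :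
    ∀ᶠ n in atTop, katz n 3 (3 * (l - 1)) + n * n.choose (2 * l - 1) + n.choose 2 ≤
      katz n 3 (3 * l) := by
  filter_upwards [eventually_mul_pow_pred_le_choose (by omega : 1 ≤ 3 * l) (2 ^ (3 * l) + 2),
    eventually_ge_atTop 1] with n hchoose hn
  have hkatz : katz n 3 (3 * (l - 1)) ≤ (2 * n).choose (3 * l - 3) := by
    simpa [show 3 * (l - 1) = 3 * l - 3 by omega] using katz_le_choose 3 n (3 * (l - 1))
  calc katz n 3 (3 * (l - 1)) + n * n.choose (2 * l - 1) + n.choose 2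
      ≤ (2 * n).choose (3 * l - 3) + n * n.choose (2 * l - 1) + n.choose 2 := by gcongr
    _ ≤ (2 ^ (3 * l) + 2) * n ^ (3 * l - 1) := lower_terms_le_mul_pow hl hn
    _ ≤ n.choose (3 * l) := hchoose
    _ ≤ katz n 3 (3 * l) := choose_le_katz (by norm_num) n _

/-- Let `H n l = A_{3l}^{n,3} - n·C(n,2l-1) + [l=2]·C(n,2)` (the `l`-th entry
of the `h*`-vector of the matroid polytope of `U^{3,n}`; here `C(n,2l-1)` is read as `0` for
`l = 0`).  For every `I` there is `N(I)` such that for all `n ≥ N(I)` the sequence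
`H n 0, H n 1, …, H n I` is nondecreasing. -/
theorem hstar_U3n_partially_unimodal (H : ℕ → ℕ → ℤ)
    (hH : ∀ n l : ℕ, H n l =
      (katz n 3 (3 * l) : ℤ) - n * (if l = 0 then 0 else (n.choose (2 * l - 1) : ℤ)) +
        (if l = 2 then (n.choose 2 : ℤ) else 0)) :
    ∀ I : ℕ, ∃ N : ℕ, ∀ n : ℕ, N ≤ n → ∀ l : ℕ, 1 ≤ l → l ≤ I → H n (l - 1) ≤ H n l := by
  intro I
  have hstep : ∀ l ∈ Finset.Icc 1 I, ∀ᶠ n in atTop, H n (l - 1) ≤ H n l := fun l hl => by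
    have hl : 1 ≤ l := (Finset.mem_Icc.1 hl).1
    filter_upwards [eventually_katz_add_lower_terms_le_katz hl] with n hn
    have hn' : (katz n 3 (3 * (l - 1)) : ℤ) + n * n.choose (2 * l - 1) + n.choose 2 ≤
        katz n 3 (3 * l) := by exact_mod_cast hn
    rw [hH n l, hH n (l - 1), if_neg (by omega : l ≠ 0)]
    have hprev_sub :
        (0 : ℤ) ≤ n * (if l - 1 = 0 then 0 else (n.choose (2 * (l - 1) - 1) : ℤ)) := by
      split_ifs <;> positivity
    have hprev_add : (if l - 1 = 2 then (n.choose 2 : ℤ) else 0) ≤ n.choose 2 := by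
      split_ifs <;> simp
    have hadd : (0 : ℤ) ≤ if l = 2 then (n.choose 2 : ℤ) else 0 := by
      split_ifs <;> simp
    linarith
  obtain ⟨N, hN⟩ := eventually_atTop.1 ((Finset.Icc 1 I).eventually_all.2 hstep)
  exact ⟨N, fun n hn l hl hlI => hN n hn l (Finset.mem_Icc.2 ⟨hl, hlI⟩)⟩
end

section
/- Let n ≥ 3 be an integer and consider the polynomial q(X) = ∏_{i=1}^{n−1} (2X + i) − n·∏_{i=0}^{n−2} (X + i) in ℤ[X]. Then q has degree n−1 and every coefficient of q in degrees 0, 1, …, n−1 is strictly positive. (Up to the factor 1/(n−1)!, q(k) is the Ehrhart polynomial of the matroid polytope of the uniform matroid U^{2,n}, i.e., q(k)/(n−1)! = |kP ∩ ℤ^n| for the hypersimplex P = conv{e_B : B ⊆ {1,…,n}, |B| = 2}; hence the coefficients of that Ehrhart polynomial are positive.) -/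
/-!
Write `m = n - 1`, so that `q = q_m := ∏_{i=1}^m (2X + i) - (m + 1)·X(X+1)⋯(X+m-1)`. Since
`(2X + m + 1)(m + 1) - (m + 2)(X + m) = mX + 1`, these polynomials satisfy
`q_{m+1} = (2X + m + 1)·q_m + (mX + 1)·X(X+1)⋯(X+m-1)`. The second summand has nonnegative
coefficients, and multiplying by `2X + m + 1` turns positive coefficients in degrees `0, …, m` into
positive coefficients in degrees `0, …, m + 1`; so positivity propagates from `q_2 = X² + 3X + 2`.
-/

open Polynomial

namespace Polynomial

section Nonneg

variable {R : Type*} [Semiring R] [PartialOrder R] [IsOrderedRing R]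

theorem coeff_mul_nonneg {p q : R[X]} (hp : ∀ k, 0 ≤ p.coeff k) (hq : ∀ k, 0 ≤ q.coeff k)
    (k : ℕ) : 0 ≤ (p * q).coeff k := by
  rw [coeff_mul]
  exact Finset.sum_nonneg fun x _ => mul_nonneg (hp _) (hq _)

theorem coeff_ascPochhammer_nonneg (m k : ℕ) : 0 ≤ (ascPochhammer R m).coeff k := by
  induction m generalizing k with
  | zero => rw [ascPochhammer_zero, coeff_one]; split_ifs <;> simp
  | succ m ih =>
    rw [ascPochhammer_succ_right]
    refine coeff_mul_nonneg ih (fun j => ?_) k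
    rw [coeff_add, coeff_X, ← C_eq_natCast, coeff_C]
    split_ifs <;> simp [add_nonneg, zero_le_one]

theorem coeff_C_mul_X_add_C_nonneg {a b : R} (ha : 0 ≤ a) (hb : 0 ≤ b) (k : ℕ) :
    0 ≤ (C a * X + C b).coeff k := by
  rw [coeff_add, coeff_C_mul_X, coeff_C]
  apply add_nonneg <;> split_ifs <;> first | assumption | exact le_rfl

end Nonneg

theorem coeff_C_mul_X_add_C_mul_pos {R : Type*} [Semiring R] [PartialOrder R]
    [IsStrictOrderedRing R] {a b : R} (ha : 0 < a) (hb : 0 < b) {p : R[X]} {m : ℕ}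
    (hp : ∀ k, 0 ≤ p.coeff k) (hpos : ∀ k ≤ m, 0 < p.coeff k) {k : ℕ} (hk : k ≤ m + 1) :
    0 < ((C a * X + C b) * p).coeff k := by
  rw [add_mul, mul_assoc, coeff_add, coeff_C_mul, coeff_C_mul]
  cases k with
  | zero => simpa using mul_pos hb (hpos 0 (Nat.zero_le m))
  | succ j =>
    rw [coeff_X_mul]
    exact add_pos_of_pos_of_nonneg (mul_pos ha (hpos j (by omega))) (mul_nonneg hb.le (hp _))

theorem prod_range_X_add_C_eq_ascPochhammer {S : Type*} [CommSemiring S] (m : ℕ) :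
    ∏ i ∈ Finset.range m, (X + C (i : S)) = ascPochhammer S m := by
  induction m with
  | zero => simp
  | succ m ih => rw [Finset.prod_range_succ, ih, ascPochhammer_succ_right, C_eq_natCast]

end Polynomial

noncomputable def ehrhartU2Poly (m : ℕ) : ℤ[X] :=
  (∏ i ∈ Finset.Icc 1 m, (2 * X + C (i : ℤ))) - C ((m + 1 : ℕ) : ℤ) * ascPochhammer ℤ m

theorem ehrhartU2Poly_succ (m : ℕ) :
    ehrhartU2Poly (m + 1) = (C 2 * X + C ((m + 1 : ℕ) : ℤ)) * ehrhartU2Poly m +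
      (C (m : ℤ) * X + C 1) * ascPochhammer ℤ m := by
  rw [ehrhartU2Poly, ehrhartU2Poly, Finset.prod_Icc_succ_top (Nat.le_add_left 1 m),
    ascPochhammer_succ_right, ← C_eq_natCast]
  push_cast
  simp only [C_add, C_1, C_ofNat]
  ring

theorem ehrhartU2Poly_two : ehrhartU2Poly 2 = X ^ 2 + C 3 * X + C 2 := by
  rw [ehrhartU2Poly, show Finset.Icc 1 2 = {1, 2} from rfl, Finset.prod_pair (by decide),
    ascPochhammer_succ_right (S := ℤ) 1, ascPochhammer_one]
  simp only [map_natCast, map_ofNat]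
  push_cast
  ring

theorem natDegree_prod_Icc_two_mul_X_add_C_le (m : ℕ) :
    (∏ i ∈ Finset.Icc 1 m, (2 * X + C (i : ℤ))).natDegree ≤ m := by
  calc (∏ i ∈ Finset.Icc 1 m, (2 * X + C (i : ℤ))).natDegree
      ≤ ∑ i ∈ Finset.Icc 1 m, (2 * X + C (i : ℤ)).natDegree := natDegree_prod_le _ _
    _ ≤ ∑ _i ∈ Finset.Icc 1 m, (1 : ℕ) := by
      gcongr with i
      compute_degree
    _ = m := by simp

theorem natDegree_ehrhartU2Poly_le (m : ℕ) : (ehrhartU2Poly m).natDegree ≤ m := by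
  refine (natDegree_sub_le _ _).trans (max_le (natDegree_prod_Icc_two_mul_X_add_C_le m) ?_)
  calc (C ((m + 1 : ℕ) : ℤ) * ascPochhammer ℤ m).natDegree
      ≤ (ascPochhammer ℤ m).natDegree := natDegree_C_mul_le _ _
    _ = m := ascPochhammer_natDegree ℤ m

theorem coeff_ehrhartU2Poly_pos {m : ℕ} (hm : 2 ≤ m) {k : ℕ} (hk : k ≤ m) :
    0 < (ehrhartU2Poly m).coeff k := by
  induction m, hm using Nat.le_induction generalizing k with
  | base =>
    rw [ehrhartU2Poly_two]
    interval_cases k <;> simp [coeff_X]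
  | succ m hm ih =>
    have hnonneg (j : ℕ) : 0 ≤ (ehrhartU2Poly m).coeff j := by
      rcases le_or_gt j m with hj | hj
      · exact (ih hj).le
      · rw [coeff_eq_zero_of_natDegree_lt ((natDegree_ehrhartU2Poly_le m).trans_lt hj)]
    have hcorrection : 0 ≤ ((C (m : ℤ) * X + C 1) * ascPochhammer ℤ m).coeff k :=
      coeff_mul_nonneg (coeff_C_mul_X_add_C_nonneg m.cast_nonneg zero_le_one)
        (coeff_ascPochhammer_nonneg m) k
    rw [ehrhartU2Poly_succ, coeff_add]
    exact add_pos_of_pos_of_nonneg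
      (coeff_C_mul_X_add_C_mul_pos two_pos (by positivity) hnonneg (fun j => ih) hk) hcorrection

/-- For `n ≥ 3`, the polynomial
`q(X) = ∏_{i=1}^{n-1} (2X + i) − n·∏_{i=0}^{n-2} (X + i)` in `ℤ[X]` has degree `n-1` and all of
its coefficients in degrees `0,…,n-1` are strictly positive.  (Up to the factor `1/(n-1)!`,
`q` is the Ehrhart polynomial of the matroid polytope of `U^{2,n}`.) -/
theorem ehrhart_U2n_coeffs_pos (n : ℕ) (hn : 3 ≤ n) (q : Polynomial ℤ)
    (hq : q = (∏ i ∈ Finset.Icc 1 (n - 1), (2 * X + C (i : ℤ))) -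
        C (n : ℤ) * ∏ i ∈ Finset.range (n - 1), (X + C (i : ℤ))) :
    q.degree = (n - 1 : ℕ) ∧ ∀ k : ℕ, k ≤ n - 1 → 0 < q.coeff k := by
  obtain ⟨m, rfl⟩ : ∃ m, n = m + 1 := ⟨n - 1, by omega⟩
  rw [Nat.add_sub_cancel, prod_range_X_add_C_eq_ascPochhammer] at hq
  rw [Nat.add_sub_cancel, hq, ← ehrhartU2Poly]
  have hpos (k : ℕ) (hk : k ≤ m) := coeff_ehrhartU2Poly_pos (by omega) hk
  exact ⟨degree_eq_of_le_of_coeff_ne_zero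
    (degree_le_of_natDegree_le (natDegree_ehrhartU2Poly_le m)) (hpos m le_rfl).ne', hpos⟩
end

section
/- Let M be a connected matroid of rank r ≥ 1 on the ground set {1,…,n}, let B_1, …, B_n be bases of M, and let X be the n × n integer matrix whose a-th row is the incidence vector e_{B_a} ∈ {0,1}^n. If the rows of X are linearly independent (over ℚ), then |det(X)| = k·r for some positive integer k. -/
/-- The `0/1` incidence vector (in `ℤ^n`) of a subset `B` of `{1,…,n}`. -/
noncomputable def incVec {n : ℕ} (B : Set (Fin n)) : Fin n → ℤ :=
  B.indicator 1

/-- A circuit of a matroid: an inclusion-minimal dependent set, i.e. a dependent set all of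
whose proper subsets are independent. -/
def Matroid.IsCircuit' {α : Type*} (M : Matroid α) (C : Set α) : Prop :=
  M.Dep C ∧ ∀ D : Set α, D ⊂ C → M.Indep D

/-- A matroid is connected if every two distinct elements of its ground set lie in a common
circuit. -/
def Matroid.ConnectedMatroid {α : Type*} (M : Matroid α) : Prop :=
  ∀ x ∈ M.E, ∀ y ∈ M.E, x ≠ y → ∃ C : Set α, M.IsCircuit' C ∧ x ∈ C ∧ y ∈ C

/-- The graph `G(X)` on vertex set `{1,…,n}` associated to a list `X` of `n` vectors in `ℤ^n`:
vertices `a ≠ b` are adjacent iff `X a - X b = e_s - e_t` for some standard unit vectors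
`e_s ≠ e_t`. -/
def Ggraph {n : ℕ} (X : Fin n → Fin n → ℤ) : SimpleGraph (Fin n) :=
  SimpleGraph.fromRel fun a b =>
    ∃ s t : Fin n, s ≠ t ∧ X a - X b = Pi.single s 1 - Pi.single t 1

/-- The graph `g(X)` on vertex set `{1,…,n}` associated to a list `X` of `n` vectors in `ℤ^n`:
vertices `s ≠ t` are adjacent iff `X a - X b = e_s - e_t` for some indices `a`, `b`. -/
def ggraph {n : ℕ} (X : Fin n → Fin n → ℤ) : SimpleGraph (Fin n) :=
  SimpleGraph.fromRel fun s t =>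
    ∃ a b : Fin n, X a - X b = Pi.single s 1 - Pi.single t 1


namespace Matrix

variable {ι R : Type*} [Fintype ι] [DecidableEq ι]

/-- Replacing column `j` by the sum of all columns keeps the determinant, and that sum is the
constant column `c`. -/
theorem det_eq_mul_det_updateCol_one_of_row_sum_eq [CommRing R] (A : Matrix ι ι R) {c : R}
    (hc : ∀ i, ∑ j, A i j = c) (j : ι) :
    A.det = c * (A.updateCol j fun _ => 1).det := by
  have hcol : (fun k => ∑ i, (1 : R) • A k i) = c • fun _ : ι => (1 : R) := by
    funext k
    simp [hc k]
  have := det_updateCol_sum A j fun _ => 1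
  rwa [hcol, det_updateCol_smul, one_smul, eq_comm] at this

theorem det_ne_zero_of_linearIndependent_rows_cast {K : Type*} [Field K] [CharZero K]
    (A : Matrix ι ι ℤ) (hA : LinearIndependent K fun i j => (A i j : K)) : A.det ≠ 0 := by
  have hunit : IsUnit (A.map (Int.cast : ℤ → K)) := linearIndependent_rows_iff_isUnit.mp hA
  have hdet : ((A.det : ℤ) : K) ≠ 0 := by
    rw [Int.cast_det]
    exact ((isUnit_iff_isUnit_det _).mp hunit).ne_zero
  exact_mod_cast hdet

end Matrix

theorem sum_incVec {n : ℕ} (B : Set (Fin n)) : ∑ i, incVec B i = B.ncard := by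
  classical
  simp [incVec, Set.indicator_apply, Finset.sum_boole, Set.ncard_eq_toFinset_card']

theorem det_bases_matrix_multiple_of_rank_general (n r : ℕ) (hr : 1 ≤ r)
    (M : Matroid (Fin n))
    (hrank : ∀ B : Set (Fin n), M.IsBase B → B.ncard = r)
    (B : Fin n → Set (Fin n)) (hB : ∀ a : Fin n, M.IsBase (B a))
    (hli : LinearIndependent ℚ fun a : Fin n => fun i : Fin n => (incVec (B a) i : ℚ)) :
    ∃ k : ℕ, 0 < k ∧ (Matrix.of fun a i : Fin n => incVec (B a) i).det.natAbs = k * r := by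
  set A : Matrix (Fin n) (Fin n) ℤ := Matrix.of fun a i => incVec (B a) i
  obtain ⟨B₀, hB₀⟩ := M.exists_isBase
  obtain ⟨j, -⟩ : B₀.Nonempty :=
    Set.nonempty_of_ncard_ne_zero (by rw [hrank B₀ hB₀]; omega)
  have hrows : ∀ a, ∑ i, A a i = r := fun a => by
    simp only [A, Matrix.of_apply, sum_incVec, hrank _ (hB a)]
  have hdet := A.det_eq_mul_det_updateCol_one_of_row_sum_eq hrows j
  have hA : A.det ≠ 0 := A.det_ne_zero_of_linearIndependent_rows_cast hli
  refine ⟨(A.updateCol j fun _ => 1).det.natAbs, ?_, ?_⟩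
  · rw [hdet] at hA
    exact Int.natAbs_pos.mpr (right_ne_zero_of_mul hA)
  · rw [hdet, Int.natAbs_mul, Int.natAbs_natCast, mul_comm]

/-- If `M` is a connected matroid of rank `r ≥ 1` on `{1,…,n}` and `X` is an
`n × n` integer matrix whose rows are incidence vectors of bases of `M` which are linearly
independent over `ℚ`, then `|det X| = k·r` for some positive integer `k`. -/
theorem det_bases_matrix_multiple_of_rank (n r : ℕ) (hr : 1 ≤ r)
    (M : Matroid (Fin n)) (hE : M.E = Set.univ)
    (hrank : ∀ B : Set (Fin n), M.IsBase B → B.ncard = r)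
    (hconn : M.ConnectedMatroid)
    (B : Fin n → Set (Fin n)) (hB : ∀ a : Fin n, M.IsBase (B a))
    (hli : LinearIndependent ℚ fun a : Fin n => fun i : Fin n => (incVec (B a) i : ℚ)) :
    ∃ k : ℕ, 0 < k ∧ (Matrix.of fun a i : Fin n => incVec (B a) i).det.natAbs = k * r :=
  det_bases_matrix_multiple_of_rank_general n r hr M hrank B hB hli
end

section
/- Let M be a connected matroid of rank r on the ground set {1,…,n}, let B_1, …, B_n be bases of M, let X = (X_1, …, X_n) be the list of their incidence vectors X_a = e_{B_a} ∈ ℤ^n, and suppose X_1, …, X_n are linearly independent (over ℚ). Then the simple graphs G(X) and g(X) have the same number of connected components. -/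
/-! For a graph `H` on a finite set `V` and linearly independent vectors `Y a`, the span of the
edge differences `Y a - Y b` has dimension `|V|` minus the number of components of `H`: for the
standard basis it is the kernel of the surjection `e_a ↦ e_[a]` onto functions on components,
and an injective linear map carries it to the general case. Over `ℚ`, the edge differences
`X a - X b` of `G(X)` are exactly the vectors `e_s - e_t` with `s ~ t` in `g(X)`, so the two graphs
give the same subspace, hence the same number of components. -/

open Module Submodule

namespace SimpleGraph

variable {V K W W' : Type*} [Field K] [AddCommGroup W] [Module K W] [AddCommGroup W'] [Module K W']

variable (K) in
def diffSpan (H : SimpleGraph V) (Y : V → W) : Submodule K W :=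
  span K {x | ∃ a b, H.Adj a b ∧ Y a - Y b = x}

theorem connectedComponentMk_out (H : SimpleGraph V) (c : H.ConnectedComponent) :
    H.connectedComponentMk c.out = c :=
  c.out_eq

theorem sub_mem_diffSpan_of_reachable {H : SimpleGraph V} (Y : V → W) {a b : V}
    (h : H.Reachable a b) : Y a - Y b ∈ H.diffSpan K Y := by
  obtain ⟨w⟩ := h
  induction w with
  | nil => simp
  | @cons u v c huv _ ih =>
    rw [← sub_add_sub_cancel _ (Y v)]
    exact add_mem (subset_span ⟨u, v, huv, rfl⟩) ih

theorem map_diffSpan (H : SimpleGraph V) (Y : V → W) (f : W →ₗ[K] W') :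
    (H.diffSpan K Y).map f = H.diffSpan K (f ∘ Y) := by
  rw [diffSpan, map_span]
  congr 1
  ext x
  simp

theorem diffSpan_fromRel (r : V → V → Prop) (Y : V → W) :
    (fromRel r).diffSpan K Y = span K {x | ∃ a b, a ≠ b ∧ r a b ∧ Y a - Y b = x} := by
  refine le_antisymm (span_le.2 ?_) (span_le.2 ?_)
  · rintro _ ⟨a, b, ⟨hab, hr | hr⟩, rfl⟩
    · exact subset_span ⟨a, b, hab, hr, rfl⟩
    · rw [← neg_sub]
      exact neg_mem (subset_span ⟨b, a, hab.symm, hr, rfl⟩)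
  · rintro _ ⟨a, b, hab, hr, rfl⟩
    exact subset_span ⟨a, b, ⟨hab, Or.inl hr⟩, rfl⟩

section Fintype

variable [Fintype V] [DecidableEq V] (H : SimpleGraph V)

open scoped Classical

variable (K) in
noncomputable def componentSum : (V → K) →ₗ[K] (H.ConnectedComponent → K) :=
  Fintype.linearCombination K fun a => Pi.single (H.connectedComponentMk a) 1

variable (K) in
noncomputable def componentSection : (H.ConnectedComponent → K) →ₗ[K] (V → K) :=
  Fintype.linearCombination K fun c => Pi.single c.out 1

theorem componentSum_single (a : V) :
    H.componentSum K (Pi.single a 1) = Pi.single (H.connectedComponentMk a) 1 := by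
  simp [componentSum]

theorem componentSection_single (c : H.ConnectedComponent) :
    H.componentSection K (Pi.single c 1) = Pi.single c.out 1 := by
  simp [componentSection]

theorem componentSum_comp_componentSection :
    H.componentSum K ∘ₗ H.componentSection K = LinearMap.id := by
  refine LinearMap.pi_ext fun c x => ?_
  rw [← mul_one x, ← smul_eq_mul, Pi.single_smul, map_smul, map_smul]
  simp [componentSection_single, componentSum_single, connectedComponentMk_out]

theorem sub_componentSection_componentSum_mem_diffSpan (x : V → K) :
    x - H.componentSection K (H.componentSum K x) ∈
      H.diffSpan K fun a => Pi.single a (1 : K) := by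
  rw [← Finset.univ_sum_single x]
  simp only [map_sum, ← Finset.sum_sub_distrib]
  refine sum_mem fun a _ => ?_
  rw [← mul_one (x a), ← smul_eq_mul, Pi.single_smul, map_smul, map_smul, ← smul_sub,
    componentSum_single, componentSection_single]
  exact smul_mem _ _ (sub_mem_diffSpan_of_reachable _
    (ConnectedComponent.exact (H.connectedComponentMk_out _).symm))

theorem diffSpan_single_eq_ker_componentSum :
    H.diffSpan K (fun a => Pi.single a (1 : K)) = LinearMap.ker (H.componentSum K) := by
  refine le_antisymm (span_le.2 ?_) fun x hx => ?_
  · rintro _ ⟨a, b, hab, rfl⟩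
    simp [componentSum_single, ConnectedComponent.sound hab.reachable]
  · simpa [LinearMap.mem_ker.1 hx] using H.sub_componentSection_componentSum_mem_diffSpan x

variable (K) in
theorem finrank_diffSpan_single_add_card_connectedComponent :
    finrank K (H.diffSpan K fun a => Pi.single a (1 : K)) + Nat.card H.ConnectedComponent =
      Fintype.card V := by
  have := Fintype.ofFinite H.ConnectedComponent
  have hsurj : LinearMap.range (H.componentSum K) = ⊤ :=
    LinearMap.range_eq_top.2 fun y =>
      ⟨H.componentSection K y, LinearMap.congr_fun H.componentSum_comp_componentSection y⟩
  have := LinearMap.finrank_range_add_finrank_ker (H.componentSum K)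
  rw [hsurj, finrank_top, ← diffSpan_single_eq_ker_componentSum, finrank_fintype_fun_eq_card K,
    finrank_fintype_fun_eq_card K] at this
  rwa [Nat.card_eq_fintype_card, add_comm]

theorem finrank_diffSpan_add_card_connectedComponent {Y : V → W} (hY : LinearIndependent K Y) :
    finrank K (H.diffSpan K Y) + Nat.card H.ConnectedComponent = Fintype.card V := by
  have hmap : (H.diffSpan K fun a => Pi.single a (1 : K)).map (Fintype.linearCombination K Y) =
      H.diffSpan K Y := by
    rw [map_diffSpan]
    congr 1
    funext a
    simp
  rw [← hmap, ← (equivMapOfInjective _ hY.fintypeLinearCombination_injective _).finrank_eq]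
  exact H.finrank_diffSpan_single_add_card_connectedComponent K

end Fintype

end SimpleGraph

theorem intCast_sub_intCast_eq_single_sub_single_iff {V K : Type*} [DecidableEq V]
    [AddGroupWithOne K] [CharZero K] {u v : V → ℤ} {s t : V} :
    (fun i => (u i : K)) - (fun i => (v i : K)) = Pi.single s 1 - Pi.single t 1 ↔
      u - v = Pi.single s 1 - Pi.single t 1 := by
  simp only [funext_iff, Pi.sub_apply, Pi.single_apply]
  refine forall_congr' fun i => ?_
  split_ifs <;> norm_cast

theorem ne_of_sub_eq_single_sub_single {V G : Type*} [DecidableEq V] [AddGroupWithOne G]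
    [NeZero (1 : G)] {u v : V → G} {s t : V} (hst : s ≠ t)
    (h : u - v = Pi.single s 1 - Pi.single t 1) : u ≠ v := by
  rintro rfl
  simpa [hst] using congrFun h s

theorem diffSpan_Ggraph_eq_diffSpan_ggraph {n : ℕ} (X : Fin n → Fin n → ℤ) :
    (Ggraph X).diffSpan ℚ (fun a i => (X a i : ℚ)) =
      (ggraph X).diffSpan ℚ fun s => Pi.single s (1 : ℚ) := by
  rw [Ggraph, ggraph, SimpleGraph.diffSpan_fromRel, SimpleGraph.diffSpan_fromRel]
  congr 1
  ext x
  constructor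
  · rintro ⟨a, b, -, ⟨s, t, hst, hX⟩, rfl⟩
    exact ⟨s, t, hst, ⟨a, b, hX⟩, (intCast_sub_intCast_eq_single_sub_single_iff.2 hX).symm⟩
  · rintro ⟨s, t, hst, ⟨a, b, hX⟩, rfl⟩
    exact ⟨a, b, fun hab => ne_of_sub_eq_single_sub_single hst hX (congrArg X hab),
      ⟨s, t, hst, hX⟩, intCast_sub_intCast_eq_single_sub_single_iff.2 hX⟩

theorem card_connectedComponent_Ggraph_eq_ggraph {n : ℕ} (X : Fin n → Fin n → ℤ)
    (hX : LinearIndependent ℚ fun a i => (X a i : ℚ)) :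
    Nat.card (Ggraph X).ConnectedComponent = Nat.card (ggraph X).ConnectedComponent := by
  have hG := (Ggraph X).finrank_diffSpan_add_card_connectedComponent hX
  have hg := (ggraph X).finrank_diffSpan_single_add_card_connectedComponent ℚ
  rw [diffSpan_Ggraph_eq_diffSpan_ggraph] at hG
  omega

theorem Ggraph_ggraph_same_components_general (n : ℕ)
    (B : Fin n → Set (Fin n))
    (hli : LinearIndependent ℚ fun a : Fin n => fun i : Fin n => (incVec (B a) i : ℚ)) :
    Nat.card (Ggraph fun a => incVec (B a)).ConnectedComponent =
      Nat.card (ggraph fun a => incVec (B a)).ConnectedComponent :=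
  card_connectedComponent_Ggraph_eq_ggraph _ hli

/-- If `M` is a connected matroid of rank `r` on `{1,…,n}` and
`X = (X_1,…,X_n)` is a linearly independent (over `ℚ`) list of incidence vectors of bases of
`M`, then the graphs `G(X)` and `g(X)` have the same number of connected components. -/
theorem Ggraph_ggraph_same_components (n r : ℕ)
    (M : Matroid (Fin n)) (hE : M.E = Set.univ)
    (hrank : ∀ B : Set (Fin n), M.IsBase B → B.ncard = r)
    (hconn : M.ConnectedMatroid)
    (B : Fin n → Set (Fin n)) (hB : ∀ a : Fin n, M.IsBase (B a))
    (hli : LinearIndependent ℚ fun a : Fin n => fun i : Fin n => (incVec (B a) i : ℚ)) :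
    Nat.card (Ggraph fun a => incVec (B a)).ConnectedComponent =
      Nat.card (ggraph fun a => incVec (B a)).ConnectedComponent :=
  Ggraph_ggraph_same_components_general n B hli
end

section
/- Let M be a connected matroid of rank r on the ground set {1,…,n}, let B_1, …, B_n be bases of M, let X = (X_1, …, X_n) be the list of their incidence vectors X_a = e_{B_a} ∈ ℤ^n, and suppose X_1, …, X_n are linearly independent (over ℚ). If the graph G(X) is connected, then the graph g(X) is connected. -/
open Matrix

theorem SimpleGraph.Reachable.apply_eq_of_forall_adj {V β : Type*} {G : SimpleGraph V}
    {f : V → β} (hf : ∀ u v, G.Adj u v → f u = f v) {u v : V} (h : G.Reachable u v) :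
    f u = f v := by
  obtain ⟨p⟩ := h
  induction p with
  | nil => rfl
  | cons hadj _ ih => exact (hf _ _ hadj).trans ih

theorem SimpleGraph.preconnected_of_forall_apply_eq {V R : Type*} [Nontrivial R]
    {G : SimpleGraph V}
    (h : ∀ f : V → R, (∀ u v, G.Adj u v → f u = f v) → ∀ u v, f u = f v) :
    G.Preconnected := by
  classical
  intro s t
  obtain ⟨x, y, hxy⟩ := exists_pair_ne R
  by_contra hst
  have hf := h (fun v => if G.Reachable s v then x else y) (fun u v huv => by
    have : G.Reachable s u ↔ G.Reachable s v :=
      ⟨fun h => h.trans huv.reachable, fun h => h.trans huv.reachable.symm⟩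
    simp only [this]) s t
  simp only [SimpleGraph.Reachable.rfl, if_true, hst, if_false] at hf
  exact hxy hf

theorem eq_of_dotProduct_eq_of_span_eq_top {K ι κ : Type*} [Field K] [Fintype κ]
    [DecidableEq κ] {v : ι → κ → K} (hv : Submodule.span K (Set.range v) = ⊤) {r c : K}
    (hr : r ≠ 0) (hsum : ∀ a, ∑ i, v a i = r) {f : κ → K} (hf : ∀ a, f ⬝ᵥ v a = c)
    (i j : κ) : f i = f j := by
  set w : κ → K := r • f - c • 1
  have hw : dotProductBilin K K w = 0 := LinearMap.ext_on_range hv fun a => by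
    simp only [w, dotProductBilin_apply_apply, sub_dotProduct, smul_dotProduct, one_dotProduct,
      hf a, hsum a, smul_eq_mul, mul_comm, sub_self, LinearMap.zero_apply]
  have hwf (u : κ) : r * f u = c := by
    have := LinearMap.congr_fun hw (Pi.single u 1)
    simpa [w, dotProduct_single, sub_eq_zero] using this
  exact mul_left_cancel₀ hr ((hwf i).trans (hwf j).symm)

theorem ggraph_adj_of_Ggraph_adj {n : ℕ} {X : Fin n → Fin n → ℤ} {a b : Fin n}
    (h : (Ggraph X).Adj a b) :
    ∃ s t, (ggraph X).Adj s t ∧ X a - X b = Pi.single s 1 - Pi.single t 1 := by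
  obtain ⟨-, ⟨s, t, hst, heq⟩ | ⟨s, t, hst, heq⟩⟩ := h
  · exact ⟨s, t, ⟨hst, .inl ⟨a, b, heq⟩⟩, heq⟩
  · refine ⟨t, s, ⟨hst.symm, .inr ⟨b, a, heq⟩⟩, ?_⟩
    rw [← neg_sub, heq, neg_sub]

theorem dotProduct_eq_of_Ggraph_adj {R : Type*} [CommRing R] {n : ℕ}
    {X : Fin n → Fin n → ℤ} {f : Fin n → R} (hf : ∀ s t, (ggraph X).Adj s t → f s = f t)
    {a b : Fin n} (h : (Ggraph X).Adj a b) :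
    f ⬝ᵥ (fun i => (X a i : R)) = f ⬝ᵥ (fun i => (X b i : R)) := by
  obtain ⟨s, t, hst, heq⟩ := ggraph_adj_of_Ggraph_adj h
  have hcast : (fun i => (X a i : R)) - (fun i => (X b i : R)) =
      Pi.single s 1 - Pi.single t 1 := by
    ext i
    have := congr_fun heq i
    simp only [Pi.sub_apply] at this ⊢
    rw [← Int.cast_sub, this]
    simp [Pi.single_apply, apply_ite (Int.cast : ℤ → R)]
  rw [← sub_eq_zero, ← dotProduct_sub, hcast, dotProduct_sub, dotProduct_single,
    dotProduct_single, hf s t hst, sub_self]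

theorem sum_incVec_cast {R : Type*} [Ring R] {n : ℕ} (B : Set (Fin n)) :
    ∑ i, (incVec B i : R) = B.ncard := by
  classical
  simp [incVec, Set.indicator_apply, Finset.sum_boole, Set.ncard_eq_toFinset_card']

theorem ggraph_connected_of_Ggraph_connected_general (n : ℕ)
    (M : Matroid (Fin n))
    (B : Fin n → Set (Fin n)) (hB : ∀ a : Fin n, M.IsBase (B a))
    (hli : LinearIndependent ℚ fun a : Fin n => fun i : Fin n => (incVec (B a) i : ℚ))
    (hG : (Ggraph fun a => incVec (B a)).Connected) :
    (ggraph fun a => incVec (B a)).Connected := by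
  obtain ⟨a₀⟩ := hG.nonempty
  have : Nonempty (Fin n) := ⟨a₀⟩
  have hspan := hli.span_eq_top_of_card_eq_finrank (by simp)
  have hr : ((B a₀).ncard : ℚ) ≠ 0 := by
    have hne : (B a₀).Nonempty := Set.nonempty_iff_ne_empty.2 fun h =>
      hli.ne_zero a₀ (by simp [h, incVec, Pi.zero_def])
    exact_mod_cast ((Set.ncard_pos (Set.toFinite _)).2 hne).ne'
  have hsum (a : Fin n) : ∑ i, (incVec (B a) i : ℚ) = (B a₀).ncard := by
    rw [sum_incVec_cast, (hB a).ncard_eq_ncard_of_isBase (hB a₀)]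
  refine ⟨SimpleGraph.preconnected_of_forall_apply_eq (R := ℚ) fun f hf => ?_⟩
  have hconst (a : Fin n) : f ⬝ᵥ (fun i => (incVec (B a) i : ℚ)) =
      f ⬝ᵥ (fun i => (incVec (B a₀) i : ℚ)) :=
    (hG.preconnected a a₀).apply_eq_of_forall_adj fun _ _ hab =>
      dotProduct_eq_of_Ggraph_adj hf hab
  exact eq_of_dotProduct_eq_of_span_eq_top hspan hr hsum hconst

/-- If `M` is a connected matroid of rank `r` on `{1,…,n}`,
`X = (X_1,…,X_n)` is a linearly independent (over `ℚ`) list of incidence vectors of bases of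
`M`, and the graph `G(X)` is connected, then the graph `g(X)` is connected. -/
theorem ggraph_connected_of_Ggraph_connected (n r : ℕ)
    (M : Matroid (Fin n)) (hE : M.E = Set.univ)
    (hrank : ∀ B : Set (Fin n), M.IsBase B → B.ncard = r)
    (hconn : M.ConnectedMatroid)
    (B : Fin n → Set (Fin n)) (hB : ∀ a : Fin n, M.IsBase (B a))
    (hli : LinearIndependent ℚ fun a : Fin n => fun i : Fin n => (incVec (B a) i : ℚ))
    (hG : (Ggraph fun a => incVec (B a)).Connected) :
    (ggraph fun a => incVec (B a)).Connected :=
  ggraph_connected_of_Ggraph_connected_general n M B hB hli hG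
end
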